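/- arXiv:2407.15974 — 2 statements merged into one kernel-verified Lean document; each statement's English description precedes it below -/
import Mathlib

section
/- Let $q \ge 1$ and let $X$ be a real Banach space. For every continuous function $v : [0,1] \to X$ there exists a unique polynomial $\tilde v$ of degree at most $q-1$ with coefficients in $X$ such that $\tilde v(1) = v(1)$ and $\int_0^1 (v(t) - \tilde v(t)) t^j \, dt = 0$ for $j = 0,\dots,q-2$. -/
/-!
Writing `ṽ t = ∑ₖ tᵏ • wₖ`, the conditions on `ṽ` say `M w = (v 1, ∫₀¹ v, …, ∫₀¹ t^(q-2) v)` for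
the real `q × q` matrix `M` whose first row is `(1, …, 1)` and whose row `j + 1` is
`(1 / (j + k + 1))ₖ`. So it suffices that `M` is invertible. If `M c = 0`, the real polynomial
`p = ∑ cₖ Xᵏ` vanishes at `1`, hence `p = (X - 1) T` with `deg T ≤ q - 2`; as `p` is orthogonal
to all `tʲ`, `j ≤ q - 2`, it is orthogonal to `T`, i.e. `∫₀¹ (1 - t) T(t)² dt = 0`, so `T = 0`.
-/

open MeasureTheory Set Polynomial

lemma eqOn_zero_of_integral_eq_zero_of_nonneg {f : ℝ → ℝ} {a b : ℝ} (hab : a ≤ b)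
    (hf : Continuous f) (hf0 : ∀ x ∈ Ioc a b, 0 ≤ f x) (hint : ∫ x in a..b, f x = 0) :
    EqOn f 0 (Ioc a b) := by
  rw [intervalIntegral.integral_eq_zero_iff_of_le_of_nonneg_ae hab
    ((ae_restrict_iff' measurableSet_Ioc).2 (ae_of_all _ hf0)) (hf.intervalIntegrable a b)] at hint
  exact Measure.eqOn_Ioc_of_ae_eq volume hint hf.continuousOn continuousOn_const

theorem Polynomial.eq_zero_of_isRoot_one_of_integral_pow_mul_eq_zero {p : ℝ[X]} {n : ℕ}
    (hdeg : p.degree ≤ n) (h1 : p.IsRoot 1)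
    (hmom : ∀ j < n, ∫ x in (0:ℝ)..1, x ^ j * p.eval x = 0) : p = 0 := by
  by_contra hp
  set T := p /ₘ (X - C 1)
  have hpT : (X - C 1) * T = p := mul_divByMonic_eq_iff_isRoot.2 h1
  have hT : T ≠ 0 := fun hT => hp (by rw [← hpT, hT, mul_zero])
  have hTdeg : T.natDegree < n := by
    have hTp := natDegree_lt_natDegree hT
      (degree_divByMonic_lt p _ hp (by rw [degree_X_sub_C]; exact zero_lt_one))
    have hpn := natDegree_le_of_degree_le hdeg
    omega
  have hTp : ∫ x in (0:ℝ)..1, T.eval x * p.eval x = 0 := by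
    simp_rw [eval_eq_sum_range' hTdeg, Finset.sum_mul, mul_assoc]
    rw [intervalIntegral.integral_finsetSum fun j _ =>
      (by fun_prop : Continuous _).intervalIntegrable 0 1]
    refine Finset.sum_eq_zero fun j hj => ?_
    rw [intervalIntegral.integral_const_mul, hmom j (Finset.mem_range.1 hj), mul_zero]
  have hvanish : EqOn (fun x => (1 - x) * T.eval x ^ 2) 0 (Ioc 0 1) := by
    refine eqOn_zero_of_integral_eq_zero_of_nonneg zero_le_one (by fun_prop)
      (fun x hx => mul_nonneg (by linarith [hx.2]) (sq_nonneg _)) ?_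
    rw [← neg_eq_zero, ← intervalIntegral.integral_neg, ← hTp]
    congr 1 with x
    rw [← hpT]
    simp only [eval_mul, eval_sub, eval_X, eval_C]
    ring
  refine hT (eq_zero_of_infinite_isRoot _ ((Ioo_infinite zero_lt_one).mono fun x hx => ?_))
  have hx0 := hvanish (Ioo_subset_Ioc_self hx)
  simp only [Pi.zero_apply, mul_eq_zero, pow_eq_zero_iff two_ne_zero] at hx0
  exact hx0.resolve_left (by linarith [hx.2])

section MatrixSmul

variable {R M ι : Type*} [Semiring R] [AddCommMonoid M] [Module R M] [Fintype ι]

lemma Matrix.sum_smul_sum_smul (A B : Matrix ι ι R) (d : ι → M) (i : ι) :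
    ∑ k, A i k • ∑ l, B k l • d l = ∑ l, (A * B) i l • d l := by
  simp_rw [Finset.smul_sum, smul_smul, Matrix.mul_apply, Finset.sum_smul]
  exact Finset.sum_comm

lemma Matrix.sum_one_apply_smul [DecidableEq ι] (d : ι → M) (i : ι) :
    ∑ l, (1 : Matrix ι ι R) i l • d l = d i := by
  simp [Matrix.one_apply]

end MatrixSmul

section Moments

variable {E : Type*} [NormedAddCommGroup E] [NormedSpace ℝ E]

def polyFun {m : ℕ} (w : Fin m → E) (t : ℝ) : E := ∑ k : Fin m, t ^ (k : ℕ) • w k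

lemma continuous_polyFun {m : ℕ} (w : Fin m → E) : Continuous (polyFun w) := by
  unfold polyFun
  fun_prop

lemma polyFun_one {m : ℕ} (w : Fin m → E) : polyFun w 1 = ∑ k, w k := by
  simp [polyFun]

lemma integral_pow_smul_polyFun [CompleteSpace E] {m : ℕ} (w : Fin m → E) (j : ℕ) :
    ∫ t in (0:ℝ)..1, t ^ j • polyFun w t = ∑ k : Fin m, ((j + k + 1 : ℕ) : ℝ)⁻¹ • w k := by
  simp_rw [polyFun, Finset.smul_sum, smul_smul, ← pow_add]
  rw [intervalIntegral.integral_finsetSum fun k _ =>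
    (by fun_prop : Continuous _).intervalIntegrable 0 1]
  refine Finset.sum_congr rfl fun k _ => ?_
  rw [intervalIntegral.integral_smul_const, integral_pow]
  norm_num [add_assoc]

/-- The matrix of `w ↦ momentVec n (polyFun w)`: its entries are `1 ^ k` and `∫₀¹ t ^ (j + k)`. -/
noncomputable def momentMatrix (n : ℕ) : Matrix (Fin (n + 1)) (Fin (n + 1)) ℝ :=
  Matrix.of (Matrix.vecCons (fun _ => 1) fun j k => ((j + k + 1 : ℕ) : ℝ)⁻¹)

noncomputable def momentVec (n : ℕ) (f : ℝ → E) : Fin (n + 1) → E :=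
  Matrix.vecCons (f 1) fun j => ∫ t in (0:ℝ)..1, t ^ (j : ℕ) • f t

lemma momentVec_polyFun [CompleteSpace E] {n : ℕ} (w : Fin (n + 1) → E) (i : Fin (n + 1)) :
    momentVec n (polyFun w) i = ∑ k, momentMatrix n i k • w k := by
  cases i using Fin.cases <;>
    simp [momentVec, momentMatrix, polyFun_one, integral_pow_smul_polyFun]

lemma momentVec_eq_momentVec_iff [CompleteSpace E] {n : ℕ} {f g : ℝ → E}
    (hf : ContinuousOn f (Icc 0 1)) (hg : ContinuousOn g (Icc 0 1)) :
    momentVec n g = momentVec n f ↔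
      g 1 = f 1 ∧ ∀ j : ℕ, j + 2 ≤ n + 1 → ∫ t in (0:ℝ)..1, t ^ j • (f t - g t) = 0 := by
  have hint : ∀ h : ℝ → E, ContinuousOn h (Icc 0 1) → ∀ j : ℕ,
      IntervalIntegrable (fun t => t ^ j • h t) volume 0 1 := fun h hh j =>
    ((continuous_pow j).continuousOn.smul hh).intervalIntegrable_of_Icc zero_le_one
  simp_rw [momentVec, Matrix.vecCons_inj, funext_iff, smul_sub,
    intervalIntegral.integral_sub (hint f hf _) (hint g hg _), sub_eq_zero,
    eq_comm (a := ∫ t in (0:ℝ)..1, _ • f t)]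
  exact and_congr_right fun _ => ⟨fun h j hj => h ⟨j, by omega⟩, fun h j => h j (by omega)⟩

lemma momentMatrix_mulVec (n : ℕ) (c : Fin (n + 1) → ℝ) :
    (momentMatrix n).mulVec c = momentVec n (polyFun c) := by
  funext i
  rw [momentVec_polyFun]
  rfl

lemma isUnit_momentMatrix (n : ℕ) : IsUnit (momentMatrix n) := by
  refine Matrix.mulVec_injective_iff_isUnit.1
    ((injective_iff_map_eq_zero (momentMatrix n).mulVecLin).2 fun c hc => ?_)
  set p : ℝ[X] := ∑ k : Fin (n + 1), C (c k) * X ^ (k : ℕ)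
  have hp : ∀ x, p.eval x = polyFun c x := fun x => by
    simp only [p, eval_finsetSum, eval_mul, eval_C, eval_pow, eval_X, polyFun, smul_eq_mul,
      mul_comm]
  have hmom : momentVec n (polyFun c) = 0 := by
    rw [← momentMatrix_mulVec]
    exact hc
  have hp0 : p = 0 := by
    refine eq_zero_of_isRoot_one_of_integral_pow_mul_eq_zero (n := n)
      (Order.le_of_lt_succ (degree_sum_fin_lt c)) ?_ fun j hj => ?_
    · simpa [IsRoot, hp, momentVec] using congrFun hmom 0
    · have hj0 := congrFun hmom (Fin.succ ⟨j, hj⟩)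
      rw [momentVec, Matrix.cons_val_succ] at hj0
      simpa [hp] using hj0
  funext k
  simpa [p, finsetSum_coeff, coeff_C_mul_X_pow, Fin.val_inj] using congr_arg (coeff · k) hp0

end Moments

theorem stmt5 (q : ℕ) (hq : 1 ≤ q)
    {X : Type*} [NormedAddCommGroup X] [NormedSpace ℝ X] [CompleteSpace X]
    (v : ℝ → X) (hv : ContinuousOn v (Set.Icc 0 1)) :
    ∃! tv : ℝ → X,
      (∃ w : Fin q → X, ∀ t, tv t = ∑ j, t ^ j.val • w j) ∧
      tv 1 = v 1 ∧
      ∀ j : ℕ, j + 2 ≤ q → ∫ t in (0:ℝ)..1, t ^ j • (v t - tv t) = 0 := by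
  obtain ⟨n, rfl⟩ : ∃ n, q = n + 1 := ⟨q - 1, by omega⟩
  obtain ⟨N, hMN, hNM⟩ := isUnit_iff_exists.1 (isUnit_momentMatrix n)
  have hconds : ∀ w : Fin (n + 1) → X, (polyFun w 1 = v 1 ∧ ∀ j : ℕ, j + 2 ≤ n + 1 →
      ∫ t in (0:ℝ)..1, t ^ j • (v t - polyFun w t) = 0) ↔
      ∀ i, ∑ k, momentMatrix n i k • w k = momentVec n v i := fun w => by
    simp_rw [← momentVec_eq_momentVec_iff hv (continuous_polyFun w).continuousOn, funext_iff,
      momentVec_polyFun]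
  refine ⟨polyFun fun k => ∑ i, N k i • momentVec n v i, ⟨⟨_, fun t => rfl⟩, ?_⟩, ?_⟩
  · rw [hconds]
    intro i
    rw [Matrix.sum_smul_sum_smul, hMN, Matrix.sum_one_apply_smul]
  · rintro _ ⟨⟨w, hw⟩, hcond⟩
    obtain rfl : _ = polyFun w := funext hw
    rw [hconds] at hcond
    congr 1 with k
    simp_rw [← hcond, Matrix.sum_smul_sum_smul, hNM, Matrix.sum_one_apply_smul]
end

section
/- Let $q \ge 1$, let $0 < c_1 < \cdots < c_q = 1$ be the Radau nodes, let the interpolant $\tilde v$ and reconstruction $\hat w$ be defined as in the paper (on a single interval $[0,1]$ for simplicity: $\tilde v$ is the degree-$(q-1)$ polynomial with $\tilde v(1) = v(1)$ and $v - \tilde v \perp \mathbb{P}_{q-2}$ in $L^2(0,1)$; $\hat w$ is the degree-$q$ polynomial with $\hat w(c_j) = w(c_j)$ for $j=1,\dots,q$ and $\hat w(0) = w_0$, a prescribed initial value). Then for every polynomial $v$ of degree at most $q$ with coefficients in a Banach space $X$, the composition with initial value $w_0 := v(0)$ reproduces $v$: $\widehat{\tilde v} = v$. -/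
/-!
Write `D = v - ṽ`, a polynomial of degree `≤ q` with `D(1) = 0` and `D ⊥ ℙ_{q-2}` on `[0,1]`.
Subtracting the right multiple of the node polynomial `N = ∏ (t - cᵢ)`, which is itself
orthogonal to `ℙ_{q-2}` because the quadrature is exact in degree `2q-2` and kills `N`,
leaves `G` of degree `≤ q-1` with `G(1) = 0` and `G ⊥ ℙ_{q-2}`. Writing `G = (t - 1) R` and
testing against `R` gives `∫ (1 - t) R² = 0`, so `G = 0`. Hence `v = ṽ` at every node, so `ŵ`
and `v` agree at the `q + 1` distinct points `0, c₁, …, c_q`, and both have degree `≤ q`.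
Vector coefficients are reduced to scalar ones by testing with continuous linear functionals.
-/

open Polynomial MeasureTheory Set Interval

namespace Polynomial

theorem integral_pos_of_nonneg_on_Icc {F : ℝ[X]} (hF : F ≠ 0) {a b : ℝ} (hab : a < b)
    (hnonneg : ∀ x ∈ Icc a b, 0 ≤ F.eval x) : 0 < ∫ x in a..b, F.eval x := by
  have h0 : 0 ≤ᵐ[volume.restrict (Ι a b)] fun x => F.eval x := by
    rw [uIoc_of_le hab.le]
    exact ae_restrict_of_forall_mem measurableSet_Ioc fun x hx =>
      hnonneg x (Ioc_subset_Icc_self hx)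
  rw [intervalIntegral.integral_pos_iff_support_of_nonneg_ae' h0
    (F.continuous.intervalIntegrable a b)]
  refine ⟨hab, ?_⟩
  calc 0 < volume (Ioc a b) := by simp [hab]
    _ = volume (Ioc a b \ {x | F.IsRoot x}) :=
        (measure_sdiff_null ((finite_setOfPred_isRoot hF).measure_zero _)).symm
    _ ≤ volume (Function.support (fun x => F.eval x) ∩ Ioc a b) :=
        measure_mono fun x hx => ⟨hx.2, hx.1⟩

theorem integral_eval_mul_eq_zero_of_forall_pow {m : ℕ} {g : ℝ → ℝ} (hg : Continuous g)
    (horth : ∀ j < m, ∫ t in (0:ℝ)..1, t ^ j * g t = 0) {R : ℝ[X]} (hR : R.natDegree < m) :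
    ∫ t in (0:ℝ)..1, R.eval t * g t = 0 := by
  simp_rw [eval_eq_sum_range' hR, Finset.sum_mul, mul_assoc]
  rw [intervalIntegral.integral_finsetSum fun j _ => by
    exact (by fun_prop : Continuous fun t => R.coeff j * (t ^ j * g t)).intervalIntegrable _ _]
  refine Finset.sum_eq_zero fun j hj => ?_
  rw [intervalIntegral.integral_const_mul, horth j (Finset.mem_range.mp hj), mul_zero]

theorem eq_zero_of_eval_one_eq_zero_of_forall_pow {m : ℕ} {G : ℝ[X]} (hG : G.natDegree ≤ m)
    (hG1 : G.eval 1 = 0) (horth : ∀ j < m, ∫ t in (0:ℝ)..1, t ^ j * G.eval t = 0) :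
    G = 0 := by
  obtain ⟨R, rfl⟩ := dvd_iff_isRoot.mpr hG1
  suffices hR : R = 0 by rw [hR, mul_zero]
  by_contra hR
  have hRdeg : R.natDegree < m := by
    rw [natDegree_mul (X_sub_C_ne_zero 1) hR, natDegree_X_sub_C] at hG
    omega
  have hRG := integral_eval_mul_eq_zero_of_forall_pow ((X - C 1) * R).continuous horth hRdeg
  have hpos := integral_pos_of_nonneg_on_Icc (F := -(R * ((X - C 1) * R)))
    (neg_ne_zero.mpr (mul_ne_zero hR (mul_ne_zero (X_sub_C_ne_zero 1) hR))) zero_lt_one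
    fun t ht => by
      simp only [eval_neg, eval_mul, eval_sub, eval_X, eval_C]
      nlinarith [ht.2, sq_nonneg (R.eval t)]
  simp only [eval_neg, eval_mul, intervalIntegral.integral_neg] at hpos
  simp only [eval_mul] at hRG
  linarith

end Polynomial

section Radau

variable {q : ℕ} {c b : Fin q → ℝ}

theorem integral_pow_mul_nodal_eq_zero
    (hquad : ∀ P : ℝ[X], P.natDegree ≤ 2 * q - 2 →
      ∫ t in (0:ℝ)..1, P.eval t = ∑ i, b i * P.eval (c i))
    {j : ℕ} (hj : j + 2 ≤ q) :
    ∫ t in (0:ℝ)..1, t ^ j * (Lagrange.nodal Finset.univ c).eval t = 0 := by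
  have hdeg : (X ^ j * Lagrange.nodal Finset.univ c).natDegree ≤ 2 * q - 2 := by
    refine natDegree_mul_le.trans ?_
    rw [natDegree_X_pow, Lagrange.natDegree_nodal, Finset.card_univ, Fintype.card_fin]
    omega
  simpa [Lagrange.eval_nodal_at_node] using hquad _ hdeg

theorem eval_nodes_eq_zero_of_forall_pow (hquad : ∀ P : ℝ[X], P.natDegree ≤ 2 * q - 2 →
      ∫ t in (0:ℝ)..1, P.eval t = ∑ i, b i * P.eval (c i))
    (hone : ∃ i, c i = 1) {D : ℝ[X]} (hD : D.natDegree ≤ q) (hD1 : D.eval 1 = 0)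
    (horth : ∀ j : ℕ, j + 2 ≤ q → ∫ t in (0:ℝ)..1, t ^ j * D.eval t = 0) (i : Fin q) :
    D.eval (c i) = 0 := by
  set N := Lagrange.nodal Finset.univ c
  have hNdeg : N.natDegree = q := by
    rw [Lagrange.natDegree_nodal, Finset.card_univ, Fintype.card_fin]
  have hG : D - C (D.coeff q) * N = 0 := by
    refine eq_zero_of_eval_one_eq_zero_of_forall_pow (m := q - 1) ?_ ?_ fun j hj => ?_
    · refine natDegree_le_pred ((natDegree_sub_le_of_le hD
        ((natDegree_C_mul_le _ _).trans hNdeg.le)).trans (max_self q).le) ?_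
      rw [coeff_sub, coeff_C_mul, ← hNdeg, (Lagrange.nodal_monic).coeff_natDegree, hNdeg,
        mul_one, sub_self]
    · obtain ⟨k, hk⟩ := hone
      rw [eval_sub, eval_mul, ← hk, Lagrange.eval_nodal_at_node (Finset.mem_univ k), hk, hD1,
        mul_zero, sub_zero]
    · have hsplit : ∀ t : ℝ, t ^ j * (D - C (D.coeff q) * N).eval t =
          t ^ j * D.eval t - D.coeff q * (t ^ j * N.eval t) := fun t => by
        simp only [eval_sub, eval_mul, eval_C]; ring
      simp_rw [hsplit]
      rw [intervalIntegral.integral_sub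
          ((by fun_prop : Continuous fun t : ℝ => t ^ j * D.eval t).intervalIntegrable _ _)
          ((by fun_prop : Continuous fun t : ℝ => D.coeff q * (t ^ j * N.eval t))
            |>.intervalIntegrable _ _),
        intervalIntegral.integral_const_mul, horth j (by omega),
        integral_pow_mul_nodal_eq_zero hquad (by omega), mul_zero, sub_zero]
  rw [sub_eq_zero.mp hG, eval_mul, Lagrange.eval_nodal_at_node (Finset.mem_univ i), mul_zero]

theorem eq_of_eval_zero_eq_of_eval_nodes_eq (hc : Function.Injective c) (hc0 : ∀ i, c i ≠ 0)
    {H P : ℝ[X]} (hH : H.natDegree ≤ q) (hP : P.natDegree ≤ q) (h0 : H.eval 0 = P.eval 0)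
    (hnodes : ∀ i, H.eval (c i) = P.eval (c i)) : H = P := by
  have h0c : (0 : ℝ) ∉ Finset.univ.map ⟨c, hc⟩ := by simpa using hc0
  refine Polynomial.eq_of_degree_sub_lt_of_eval_finset_eq (Finset.cons 0 _ h0c) ?_ ?_
  · rw [Finset.card_cons, Finset.card_map, Finset.card_univ, Fintype.card_fin]
    exact (degree_le_of_natDegree_le (natDegree_sub_le_of_le hH hP)).trans_lt
      (by exact_mod_cast (max_self q).trans_lt q.lt_succ_self)
  · simp only [Finset.mem_cons, Finset.mem_map, Finset.mem_univ, true_and]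
    rintro x (rfl | ⟨i, rfl⟩)
    exacts [h0, hnodes i]

theorem eq_of_radau_reconstruction (hc : Function.Injective c) (hc0 : ∀ i, c i ≠ 0)
    (hone : ∃ i, c i = 1)
    (hquad : ∀ P : ℝ[X], P.natDegree ≤ 2 * q - 2 →
      ∫ t in (0:ℝ)..1, P.eval t = ∑ i, b i * P.eval (c i))
    {P S H : ℝ[X]} (hP : P.natDegree ≤ q) (hS : S.natDegree ≤ q - 1) (hH : H.natDegree ≤ q)
    (h1 : P.eval 1 = S.eval 1)
    (horth : ∀ j : ℕ, j + 2 ≤ q → ∫ t in (0:ℝ)..1, t ^ j * (P - S).eval t = 0)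
    (hnodes : ∀ i, H.eval (c i) = S.eval (c i)) (h0 : H.eval 0 = P.eval 0) : H = P := by
  have hPS := eval_nodes_eq_zero_of_forall_pow hquad hone
    ((natDegree_sub_le_of_le hP hS).trans (by omega)) (by rw [eval_sub, h1, sub_self]) horth
  refine eq_of_eval_zero_eq_of_eval_nodes_eq hc hc0 hH hP h0
    fun i => ?_
  rw [hnodes i, eq_comm, ← sub_eq_zero, ← eval_sub, hPS i]

end Radau

section DualReduction

variable {E : Type*} [NormedAddCommGroup E] [NormedSpace ℝ E] {n : ℕ} {f : ℝ → E}

theorem continuous_of_eq_sum_pow_smul (hf : ∃ a : Fin n → E, ∀ t, f t = ∑ j, t ^ j.val • a j) :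
    Continuous f := by
  obtain ⟨a, ha⟩ := hf
  rw [funext ha]
  fun_prop

theorem exists_polynomial_eval_eq_dual_apply
    (hf : ∃ a : Fin n → E, ∀ t, f t = ∑ j, t ^ j.val • a j) (φ : StrongDual ℝ E) :
    ∃ p : ℝ[X], p.natDegree ≤ n - 1 ∧ ∀ t, p.eval t = φ (f t) := by
  obtain ⟨a, ha⟩ := hf
  refine ⟨∑ j, C (φ (a j)) * X ^ j.val, natDegree_sum_le_of_forall_le _ _ fun j _ => ?_,
    fun t => ?_⟩
  · exact (natDegree_C_mul_X_pow_le _ _).trans (by omega)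
  · simp only [ha, map_sum, map_smul, smul_eq_mul, eval_finsetSum, eval_mul, eval_C, eval_pow,
      eval_X, mul_comm]

end DualReduction

theorem stmt19 (q : ℕ) (hq : 1 ≤ q)
    {X : Type*} [NormedAddCommGroup X] [NormedSpace ℝ X] [CompleteSpace X]
    (c : Fin q → ℝ) (hmono : StrictMono c) (hpos : ∀ i, 0 < c i)
    (hlast : c ⟨q - 1, by omega⟩ = 1)
    (b : Fin q → ℝ)
    (hquad : ∀ P : Polynomial ℝ, P.natDegree ≤ 2 * q - 2 →
      ∫ t in (0:ℝ)..1, P.eval t = ∑ i, b i * P.eval (c i))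
    (v : ℝ → X) (av : Fin (q + 1) → X) (hv : ∀ t, v t = ∑ j, t ^ j.val • av j)
    (tv : ℝ → X)
    (htvpoly : ∃ a : Fin q → X, ∀ t, tv t = ∑ j, t ^ j.val • a j)
    (htv1 : tv 1 = v 1)
    (horth : ∀ j : ℕ, j + 2 ≤ q → ∫ t in (0:ℝ)..1, t ^ j • (v t - tv t) = 0)
    (hatv : ℝ → X)
    (hhatpoly : ∃ a : Fin (q + 1) → X, ∀ t, hatv t = ∑ j, t ^ j.val • a j)
    (hhatnodes : ∀ i, hatv (c i) = tv (c i))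
    (hhat0 : hatv 0 = v 0) :
    hatv = v := by
  have hvcont := continuous_of_eq_sum_pow_smul ⟨av, hv⟩
  have htvcont := continuous_of_eq_sum_pow_smul htvpoly
  funext t
  refine (SeparatingDual.eq_iff_forall_dual_eq (R := ℝ)).mpr fun φ => ?_
  obtain ⟨P, hPdeg, hP⟩ := exists_polynomial_eval_eq_dual_apply ⟨av, hv⟩ φ
  obtain ⟨S, hSdeg, hS⟩ := exists_polynomial_eval_eq_dual_apply htvpoly φ
  obtain ⟨H, hHdeg, hH⟩ := exists_polynomial_eval_eq_dual_apply hhatpoly φ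
  have horthφ : ∀ j : ℕ, j + 2 ≤ q → ∫ s in (0:ℝ)..1, s ^ j * (P - S).eval s = 0 := by
    intro j hj
    calc ∫ s in (0:ℝ)..1, s ^ j * (P - S).eval s
        = ∫ s in (0:ℝ)..1, φ (s ^ j • (v s - tv s)) := by simp [hP, hS]
      _ = φ (∫ s in (0:ℝ)..1, s ^ j • (v s - tv s)) :=
          φ.intervalIntegral_comp_comm ((by fun_prop : Continuous fun s : ℝ =>
            s ^ j • (v s - tv s)).intervalIntegrable _ _)
      _ = 0 := by rw [horth j hj, map_zero]
  have hHP : H = P := eq_of_radau_reconstruction hmono.injective (fun i => (hpos i).ne') ⟨_, hlast⟩ hquad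
    (hPdeg.trans_eq (Nat.add_sub_cancel q 1)) hSdeg (hHdeg.trans_eq (Nat.add_sub_cancel q 1))
    (by rw [hP, hS, htv1]) horthφ (fun i => by rw [hH, hS, hhatnodes i])
    (by rw [hH, hP, hhat0])
  rw [← hH, ← hP, hHP]
end
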